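/- Let G be a connected graph of order n. Then th₊(G) = n if and only if G is the complete graph Kₙ. -/

import Mathlib

open SimpleGraph

/-- Reachability in `G` avoiding the blue set `B` (i.e., within a white component). -/
def offReach {V : Type*} (G : SimpleGraph V) (B : Set V) : V → V → Prop :=
  Relation.ReflTransGen (fun a b => G.Adj a b ∧ a ∉ B ∧ b ∉ B)

/-- The positive semidefinite color change rule: a blue vertex `v` forces a white vertex `w`
if `w` is the unique white neighbor of `v` in the white component of `w` (together with `B`). -/
def psdForces {V : Type*} (G : SimpleGraph V) (B : Set V) (v w : V) : Prop :=
  v ∈ B ∧ w ∉ B ∧ G.Adj v w ∧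
    ∀ u, u ∉ B → G.Adj v u → offReach G B u w → u = w

/-- One round of PSD forcing: perform all possible forces. -/
def psdStep {V : Type*} (G : SimpleGraph V) (B : Set V) : Set V :=
  B ∪ {w | ∃ v, psdForces G B v w}

/-- `S` is a positive semidefinite zero forcing set. -/
def IsPSDForcingSet {V : Type*} (G : SimpleGraph V) (S : Set V) : Prop :=
  ∃ t, (psdStep G)^[t] S = Set.univ

/-- The PSD propagation time of `S`. -/
noncomputable def psdPt {V : Type*} (G : SimpleGraph V) (S : Set V) : ℕ :=
  sInf {t | (psdStep G)^[t] S = Set.univ}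

/-- The PSD throttling number of `G`. -/
noncomputable def psdTh {V : Type*} (G : SimpleGraph V) [Fintype V] : ℕ :=
  sInf {k | ∃ S : Finset V, IsPSDForcingSet G ↑S ∧ k = S.card + psdPt G ↑S}

/-!
If `G` is not complete, pick non-adjacent `x ≠ y`. With all vertices but `x, y` blue, the two
white vertices form singleton white components, so a blue neighbour of each (which exists by
connectivity) forces it in one round: `th₊(G) ≤ (n - 2) + 1 < n`. In `Kₙ`, as soon as two vertices
are white, every blue vertex sees both of them in one white component and nothing is ever forced;
so a PSD forcing set misses at most one vertex, and missing one costs a round: `th₊(Kₙ) = n`.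
-/

section Forcing

variable {V : Type*} {G : SimpleGraph V} {B : Set V}

theorem offReach.eq_of_isIndepSet_compl (hB : G.IsIndepSet Bᶜ) {u w : V}
    (h : offReach G B u w) : u = w := by
  induction h with
  | refl => rfl
  | tail _ hab _ => exact absurd hab.1 (hB hab.2.1 hab.2.2 hab.1.ne)

theorem psdForces_of_isIndepSet_compl (hB : G.IsIndepSet Bᶜ) {v w : V} (hv : v ∈ B)
    (hw : w ∉ B) (hvw : G.Adj v w) : psdForces G B v w :=
  ⟨hv, hw, hvw, fun _ _ _ h => h.eq_of_isIndepSet_compl hB⟩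

theorem psdStep_eq_univ_of_isIndepSet_compl (hB : G.IsIndepSet Bᶜ)
    (hnbr : ∀ w ∉ B, ∃ v, G.Adj v w) : psdStep G B = Set.univ := by
  refine Set.eq_univ_of_forall fun w => ?_
  by_cases hw : w ∈ B
  · exact Or.inl hw
  obtain ⟨v, hvw⟩ := hnbr w hw
  have hv : v ∈ B := by_contra fun hv => hB hv hw hvw.ne hvw
  exact Or.inr ⟨v, psdForces_of_isIndepSet_compl hB hv hw hvw⟩

theorem not_psdForces_top {u v w : V} (hu : u ∉ B) (huw : u ≠ w) :
    ¬psdForces (⊤ : SimpleGraph V) B v w := by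
  rintro ⟨hv, hw, -, huniq⟩
  have hvu : v ≠ u := fun h => hu (h ▸ hv)
  exact huw (huniq u hu hvu (.single ⟨huw, hu, hw⟩))

theorem psdStep_top_eq_self {x y : V} (hx : x ∉ B) (hy : y ∉ B) (hxy : x ≠ y) :
    psdStep (⊤ : SimpleGraph V) B = B := by
  refine Set.union_eq_left.mpr fun w ⟨v, hvw⟩ => ?_
  by_cases hwx : x = w
  · exact absurd hvw (not_psdForces_top hy (hwx ▸ hxy.symm))
  · exact absurd hvw (not_psdForces_top hx hwx)

theorem card_le_card_add_one_of_isPSDForcingSet_top [Fintype V] {S : Finset V}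
    (hS : IsPSDForcingSet (⊤ : SimpleGraph V) S) : Fintype.card V ≤ S.card + 1 := by
  classical
  have hcompl : Sᶜ.card ≤ 1 := by
    by_contra! hlt
    obtain ⟨x, hx, y, hy, hxy⟩ := Finset.one_lt_card.mp hlt
    rw [Finset.mem_compl] at hx hy
    obtain ⟨t, ht⟩ := hS
    rw [Function.iterate_fixed (psdStep_top_eq_self (B := ↑S) hx hy hxy)] at ht
    exact hx (Finset.mem_coe.mp (ht ▸ Set.mem_univ x))
  have := Finset.card_compl S
  omega

end Forcing

section Throttling

variable {V : Type*} (G : SimpleGraph V)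

theorem psdPt_pos {S : Set V} (hS : IsPSDForcingSet G S) (hne : S ≠ Set.univ) :
    0 < psdPt G S := by
  refine Nat.pos_of_ne_zero fun h => hne ?_
  have hmem : psdPt G S ∈ {t | (psdStep G)^[t] S = Set.univ} := Nat.sInf_mem hS
  rwa [h] at hmem

variable [Fintype V]

theorem psdTh_le (S : Finset V) (t : ℕ) (h : (psdStep G)^[t] S = Set.univ) :
    psdTh G ≤ S.card + t :=
  calc psdTh G ≤ S.card + psdPt G S := Nat.sInf_le ⟨S, ⟨t, h⟩, rfl⟩
    _ ≤ S.card + t := Nat.add_le_add_left (Nat.sInf_le h) _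

theorem psdTh_top : psdTh (⊤ : SimpleGraph V) = Fintype.card V := by
  have huniv : ((Finset.univ : Finset V) : Set V) = Set.univ := Finset.coe_univ
  refine le_antisymm (by simpa using psdTh_le ⊤ Finset.univ 0 (by simp)) ?_
  refine le_csInf ⟨_, Finset.univ, ⟨0, huniv⟩, rfl⟩ ?_
  rintro k ⟨S, hS, rfl⟩
  by_cases hSu : (S : Set V) = Set.univ
  · rw [Finset.coe_eq_univ.mp hSu, Finset.card_univ]
    exact Nat.le_add_right _ _
  · have := psdPt_pos ⊤ hS hSu
    have := card_le_card_add_one_of_isPSDForcingSet_top hS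
    omega

theorem psdTh_lt_card_of_not_adj (hG : G.Preconnected) {x y : V} (hxy : x ≠ y)
    (hnadj : ¬G.Adj x y) : psdTh G < Fintype.card V := by
  classical
  have : Nontrivial V := nontrivial_of_ne x y hxy
  set S : Finset V := {x, y}ᶜ
  have hSc : (S : Set V)ᶜ = {x, y} := by
    simp only [S, Finset.coe_compl, compl_compl, Finset.coe_insert, Finset.coe_singleton]
  have hindep : G.IsIndepSet (S : Set V)ᶜ :=
    hSc ▸ Set.pairwise_pair.mpr fun _ => ⟨hnadj, fun h => hnadj h.symm⟩
  have hstep : psdStep G S = Set.univ :=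
    psdStep_eq_univ_of_isIndepSet_compl hindep fun w _ =>
      (hG.exists_adj_of_nontrivial w).imp fun _ h => h.symm
  have hcard : S.card + 2 = Fintype.card V := by
    rw [Finset.card_compl, Finset.card_pair hxy]
    have := Finset.card_le_univ ({x, y} : Finset V)
    rw [Finset.card_pair hxy] at this
    omega
  have := psdTh_le G S 1 hstep
  omega

end Throttling

theorem stmt_17 {V : Type*} [Fintype V] (G : SimpleGraph V) (hG : G.Connected) :
    psdTh G = Fintype.card V ↔ G = ⊤ := by
  constructor
  · intro hth
    by_contra hne
    rw [eq_top_iff_forall_ne_adj] at hne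
    push Not at hne
    obtain ⟨x, y, hxy, hnadj⟩ := hne
    exact (psdTh_lt_card_of_not_adj G hG.preconnected hxy hnadj).ne hth
  · rintro rfl
    exact psdTh_top
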